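/- Let M be an additive commutative monoid, G an additive commutative group, and let s : ℕ → M and g : ℕ → G be families of elements. Suppose that the family g is linearly independent over ℤ, and that every non-negative linear relation among the s i transfers to g, i.e., for all finitely supported functions c, d : ℕ →₀ ℕ, if ∑ i, c i • s i = ∑ i, d i • s i in M, then ∑ i, c i • g i = ∑ i, d i • g i in G. Then M contains an additive submonoid isomorphic, as an additive monoid, to the free commutative monoid ℕ →₀ ℕ on countably many generators (that is, to (ℤ^{≥0})^∞, the direct sum of countably many copies of the non-negative integers). -/

import Mathlib

theorem LinearIndependent.exists_addSubmonoid_addEquiv_finsupp {ι M : Type*} [AddCommMonoid M]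
    {s : ι → M} (hs : LinearIndependent ℕ s) :
    ∃ S : AddSubmonoid M, Nonempty ((ι →₀ ℕ) ≃+ S) :=
  ⟨_, ⟨(LinearEquiv.ofInjective _ hs).toAddEquiv⟩⟩

/-- Algebraic form of the paper's main theorem: if `g : ℕ → G` is
`ℤ`-linearly independent in an abelian group `G` and every non-negative linear
relation among the `s i` in the commutative monoid `M` transfers to `g`, then
`M` contains an additive submonoid isomorphic to the free commutative monoid
`ℕ →₀ ℕ` on countably many generators (i.e. `(ℤ^{≥0})^∞`). -/
theorem stmt_1 {M G : Type*} [AddCommMonoid M] [AddCommGroup G]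
    (s : ℕ → M) (g : ℕ → G)
    (hg : LinearIndependent ℤ g)
    (h : ∀ c d : ℕ →₀ ℕ,
      (c.sum fun i n => n • s i) = (d.sum fun i n => n • s i) →
      (c.sum fun i n => n • g i) = (d.sum fun i n => n • g i)) :
    ∃ S : AddSubmonoid M, Nonempty ((ℕ →₀ ℕ) ≃+ S) := by
  -- `c.sum fun i n => n • s i` is `Finsupp.linearCombination ℕ s c` by definition.
  have hs : LinearIndependent ℕ s := fun c d hcd => hg.restrict_scalars' ℕ (h c d hcd)
  exact hs.exists_addSubmonoid_addEquiv_finsupp
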